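/- For p ∈ (0,1), the function B(p) = ((8−5p)/24) log₂((8−5p)/24) − ((4−p)/3) log₂((4−p)/24) + (3p/8) log₂(p/8) − ((2+p)/2) log₂((2+p)/24) is strictly greater than 6. -/

import Mathlib

/-!
Writing each argument `x / 24` as `(x / 3) / 8` and using that the four weights sum to `-2`,
`B(p) = 6 + K(p) / log 2`, where `K` is the same combination of natural logarithms of
`(8 - 5p)/3 > 1`, `(4 - p)/3 > 1`, `p < 1` and `(2 + p)/3 < 1`. Each logarithm is bounded on the
favourable side, by `2(y - 1)/(y + 1)` (first term of the `artanh` series) or by `(y - y⁻¹)/2`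
(`t ≤ sinh t` at `t = log y`), and the resulting rational function equals
`(1 - p)² (1003 + 244p - 95p²) / (144 (11 - 5p)(5 + p)) > 0`.
-/

open Real

namespace Real

theorem two_mul_sub_one_div_add_one_le_log {y : ℝ} (hy : 1 ≤ y) :
    2 * (y - 1) / (y + 1) ≤ log y := by
  rcases hy.eq_or_lt with rfl | hy
  · simp
  have hsum := hasSum_log_one_add_inv (inv_pos.2 (sub_pos.2 hy))
  have : y - 1 ≠ 0 := by linarith
  rw [inv_inv, add_sub_cancel, show 2 * (y - 1)⁻¹ + 1 = (y + 1) / (y - 1) by field_simp; ring,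
    one_div_div] at hsum
  simpa [mul_div_assoc] using le_hasSum hsum 0 fun k _ ↦ by positivity

theorem log_le_two_mul_sub_one_div_add_one {y : ℝ} (hy0 : 0 < y) (hy : y ≤ 1) :
    log y ≤ 2 * (y - 1) / (y + 1) := by
  have h := two_mul_sub_one_div_add_one_le_log ((one_le_inv₀ hy0).2 hy)
  have e : 2 * (y⁻¹ - 1) / (y⁻¹ + 1) = -(2 * (y - 1) / (y + 1)) := by
    field_simp
    ring
  rw [log_inv, e] at h
  linarith

theorem log_le_sub_inv_div_two {y : ℝ} (hy : 1 ≤ y) : log y ≤ (y - y⁻¹) / 2 := by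
  rw [← sinh_log (by linarith)]
  exact self_le_sinh_iff.2 (log_nonneg hy)

theorem sub_inv_div_two_le_log {y : ℝ} (hy0 : 0 < y) (hy : y ≤ 1) : (y - y⁻¹) / 2 ≤ log y := by
  rw [← sinh_log hy0]
  exact sinh_le_self_iff.2 (log_nonpos hy0.le hy)

theorem logb_two_div_eight {x : ℝ} (hx : x ≠ 0) : logb 2 (x / 8) = logb 2 x - 3 := by
  rw [logb_div hx (by norm_num), show (8 : ℝ) = 2 ^ 3 by norm_num, logb_pow,
    logb_self_eq_one one_lt_two]
  norm_num

end Real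

theorem logb_two_div_twentyFour {x : ℝ} (hx : x ≠ 0) :
    logb 2 (x / 24) = logb 2 (x / 3) - 3 := by
  rw [← logb_two_div_eight (div_ne_zero hx three_ne_zero)]
  ring_nf

theorem centered_combination_pos {p : ℝ} (hp0 : 0 < p) (hp1 : p < 1) :
    0 < (8 - 5 * p) / 24 * log ((8 - 5 * p) / 3) - (4 - p) / 3 * log ((4 - p) / 3)
      + 3 * p / 8 * log p - (2 + p) / 2 * log ((2 + p) / 3) := by
  have hrat :
      0 < (1 - p) ^ 2 * (1003 + 244 * p - 95 * p ^ 2) / (144 * (11 - 5 * p) * (5 + p)) := by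
    have : 0 < 1 - p := by linarith
    have : 0 < 11 - 5 * p := by linarith
    have : 0 < 1003 + 244 * p - 95 * p ^ 2 := by nlinarith
    positivity
  calc 0 < _ := hrat
    _ = (8 - 5 * p) / 24 * (2 * ((8 - 5 * p) / 3 - 1) / ((8 - 5 * p) / 3 + 1))
          - (4 - p) / 3 * (((4 - p) / 3 - ((4 - p) / 3)⁻¹) / 2)
          + 3 * p / 8 * ((p - p⁻¹) / 2)
          - (2 + p) / 2 * (2 * ((2 + p) / 3 - 1) / ((2 + p) / 3 + 1)) := by
      -- in the form `field_simp` normalizes `11 - 5 * p` to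
      have : 11 - p * 5 ≠ 0 := by linarith
      have : 4 - p ≠ 0 := by linarith
      have : 5 + p ≠ 0 := by linarith
      have := hp0.ne'
      rw [show (8 - 5 * p) / 3 + 1 = (11 - 5 * p) / 3 by ring,
        show (2 + p) / 3 + 1 = (5 + p) / 3 by ring]
      field_simp
      ring
    _ ≤ _ := by
      gcongr
      · linarith
      · exact two_mul_sub_one_div_add_one_le_log (by linarith)
      · linarith
      · exact log_le_sub_inv_div_two (by linarith)
      · exact sub_inv_div_two_le_log hp0 hp1.le
      · exact log_le_two_mul_sub_one_div_add_one (by positivity) (by linarith)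

theorem stmt_16 (p : ℝ) (hp : p ∈ Set.Ioo (0:ℝ) 1) :
    ((8 - 5 * p) / 24) * Real.logb 2 ((8 - 5 * p) / 24)
      - ((4 - p) / 3) * Real.logb 2 ((4 - p) / 24)
      + (3 * p / 8) * Real.logb 2 (p / 8)
      - ((2 + p) / 2) * Real.logb 2 ((2 + p) / 24) > 6 := by
  obtain ⟨hp0, hp1⟩ := hp
  rw [logb_two_div_twentyFour (by linarith), logb_two_div_twentyFour (by linarith),
    logb_two_div_eight hp0.ne', logb_two_div_twentyFour (by linarith)]
  have hK := div_pos (centered_combination_pos hp0 hp1) (log_pos one_lt_two)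
  refine lt_of_sub_pos (hK.trans_eq ?_)
  simp only [logb]
  ring
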